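/- arXiv:math/0309107 — 3 statements merged into one kernel-verified Lean document; each statement's English description precedes it below -/
import Mathlib

section
/- Let s be a fast external address. Define b := limsup_{n→∞} F^{−(n−1)}(2π|s_n|) and t_n := T(𝓕^{n−1}(s, t_s)) for n ≥ 1, where F^{−1}(t) = log(1+t) is the inverse of F and F^{−k} its k-th iterate. Then for every K > 0 the following are equivalent: (1) there exist C₁ > 0 and n₀ ∈ ℕ such that 2π|s_n| < C₁·t_nᴷ for all n ≥ n₀; (2) there exist C₂ > 0 and n₀ ∈ ℕ such that 2π|s_n| < C₂·(F^{n−1}(b))ᴷ for all n ≥ n₀. -/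
open Filter Topology ENNReal

noncomputable section

/-- The space of external addresses: integer sequences (indexed from 0, so index `k`
corresponds to the entry `s_{k+1}` of the paper) with the lexicographic order. -/
abbrev Addr : Type := Lex (ℕ → ℤ)

/-- The shift map `σ` on external addresses. -/
def shiftA (s : Addr) : Addr := toLex (fun n => ofLex s (n + 1))

/-- The model growth function `F(t) = e^t - 1`. -/
def Fexp (t : ℝ) : ℝ := Real.exp t - 1

/-- The model map `𝓕(s,t) = (σ s, F t - 2π |s₂|)`. -/
def Fmod (p : Addr × ℝ) : Addr × ℝ :=
  (shiftA p.1, Fexp p.2 - 2 * Real.pi * |((ofLex p.1 1 : ℤ) : ℝ)|)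

/-- The model set `X̄ = {(s,t) : T(𝓕ⁿ(s,t)) ≥ 0 for all n ≥ 0}`. -/
def Xbar : Set (Addr × ℝ) := {p | ∀ n : ℕ, 0 ≤ (Fmod^[n] p).2}

/-- The model escaping set `X = {(s,t) ∈ X̄ : T(𝓕ⁿ(s,t)) → ∞}`. -/
def Xset : Set (Addr × ℝ) :=
  {p | p ∈ Xbar ∧ Tendsto (fun n : ℕ => (Fmod^[n] p).2) atTop atTop}

/-- The minimal potential `t_s ∈ [0,∞]` of an address (`∞` if `(s,t) ∉ X̄` for all `t ≥ 0`). -/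
def tS (s : Addr) : ℝ≥0∞ :=
  sInf (ENNReal.ofReal '' {t : ℝ | 0 ≤ t ∧ (s, t) ∈ Xbar})

/-- The exponential map `E_κ(z) = e^z + κ`. -/
def Eexp (κ : ℂ) (z : ℂ) : ℂ := Complex.exp z + κ

/-- The escaping set `I(E_κ)`. -/
def escapingSet (κ : ℂ) : Set ℂ :=
  {z | Tendsto (fun n : ℕ => ‖(Eexp κ)^[n] z‖) atTop atTop}

/-- The order topology induced by the lexicographic order on external addresses. -/
instance : TopologicalSpace Addr := Preorder.topology Addr
instance : OrderTopology Addr := ⟨rfl⟩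

/-- The inverse `F⁻¹(t) = log(1+t)` of the model growth function. -/
def Finv (t : ℝ) : ℝ := Real.log (1 + t)

/-- The minimal potential `b = limsup_{n→∞} F^{-(n-1)}(2π |s_n|)`; with 0-based indexing,
the paper's `s_n` is `ofLex s (n-1)`, so we take the limsup over `m = n - 1`. -/
def minPot (s : Addr) : ℝ :=
  Filter.limsup (fun m : ℕ => Finv^[m] (2 * Real.pi * |((ofLex s m : ℤ) : ℝ)|)) atTop

/-!
Write `T n` for the potential `t_{n+1}` of the orbit of `(s, t_s)` and `a n = 2π|s_{n+1}|`, so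
that `T (n+1) = F (T n) - a (n+1)`. Since `a (n+1) ≤ F (T n)`, the pullbacks `F^{-n} (T n)`
decrease and dominate `F^{-(n+1)} (a (n+1))`; hence `F^n b ≤ T n`, which is the easy implication.

Minimality of `t_s` forces `F^{-n} (T n) → b`. Otherwise pick `b < β < lim F^{-n} (T n)`: then
`a n ≤ F^n β` eventually, and the value `F^N β + 1 < T N` at a late time `N` pulls back to a
smaller starting potential whose orbit stays above `F^n β + 1` forever, because
`F (u + 1) - F u ≥ F u + 1`.

For the hard implication, `a n < C T n ^ K` gives `T n ≤ log (1 + C) + L F^{-1} (T (n+1))` with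
`L = max K 1`, which iterates to `T n ≤ L F^{-k} (T (n+k)) + E`; letting `k → ∞` and using the
convergence above yields `T n ≤ L F^n b + E`.
-/

open Function

lemma fexp_add_one (t : ℝ) : Fexp t + 1 = Real.exp t := by simp [Fexp]

lemma fexp_strictMono : StrictMono Fexp := fun _ _ h => sub_lt_sub_right (Real.exp_lt_exp.2 h) 1

lemma continuous_fexp : Continuous Fexp := Real.continuous_exp.sub continuous_const

lemma le_fexp (t : ℝ) : t ≤ Fexp t := by
  linarith [Real.add_one_le_exp t, fexp_add_one t]

lemma add_sq_div_two_le_fexp {t : ℝ} (ht : 0 ≤ t) : t + t ^ 2 / 2 ≤ Fexp t := by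
  linarith [Real.quadratic_le_exp_of_nonneg ht, fexp_add_one t]

lemma fexp_add_one_le_fexp_add_one_sub_fexp (t : ℝ) : Fexp t + 1 ≤ Fexp (t + 1) - Fexp t := by
  have he : 2 ≤ Real.exp 1 := by linarith [Real.add_one_le_exp 1]
  simp only [Fexp, Real.exp_add]
  nlinarith [Real.exp_pos t]

lemma mul_sub_le_fexp_sub_fexp (x y : ℝ) : (Fexp y + 1) * (x - y) ≤ Fexp x - Fexp y := by
  have hxy : Real.exp x = Real.exp y * Real.exp (x - y) := by rw [← Real.exp_add]; ring_nf
  simp only [Fexp, hxy]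
  nlinarith [Real.exp_pos y, Real.add_one_le_exp (x - y)]

lemma finv_fexp (t : ℝ) : Finv (Fexp t) = t := by
  rw [Finv, ← add_comm, fexp_add_one, Real.log_exp]

lemma fexp_finv {x : ℝ} (hx : 0 ≤ x) : Fexp (Finv x) = x := by
  rw [Finv, Fexp, Real.exp_log (by linarith)]; ring

lemma finv_nonneg {x : ℝ} (hx : 0 ≤ x) : 0 ≤ Finv x := Real.log_nonneg (by linarith)

lemma finv_le_finv {x y : ℝ} (hx : 0 ≤ x) (h : x ≤ y) : Finv x ≤ Finv y :=
  Real.log_le_log (by linarith) (by linarith)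

lemma finv_mul_add_le {L w E : ℝ} (hL : 1 ≤ L) (hw : 0 ≤ w) (hE : 0 ≤ E) :
    Finv (L * w + E) ≤ Real.log L + Finv w + Finv E := by
  rw [Finv, Finv, Finv, ← Real.log_mul (by linarith) (by linarith),
    ← Real.log_mul (by positivity) (by linarith)]
  exact Real.log_le_log (by positivity) (by nlinarith [mul_nonneg hw hE])

lemma fexp_iterate_strictMono (n : ℕ) : StrictMono Fexp^[n] := fexp_strictMono.iterate n

lemma le_fexp_iterate (n : ℕ) (x : ℝ) : x ≤ Fexp^[n] x := id_le_iterate_of_id_le le_fexp n x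

lemma fexp_iterate_finv_iterate (n : ℕ) {x : ℝ} (hx : 0 ≤ x) : Fexp^[n] (Finv^[n] x) = x := by
  induction n generalizing x with
  | zero => rfl
  | succ n ih => rw [iterate_succ_apply', iterate_succ_apply, ih (finv_nonneg hx), fexp_finv hx]

lemma finv_iterate_le_iff (n : ℕ) {x : ℝ} (hx : 0 ≤ x) (y : ℝ) :
    Finv^[n] x ≤ y ↔ x ≤ Fexp^[n] y := by
  rw [← (fexp_iterate_strictMono n).le_iff_le, fexp_iterate_finv_iterate n hx]

lemma finv_iterate_nonneg (n : ℕ) {x : ℝ} (hx : 0 ≤ x) : 0 ≤ Finv^[n] x := by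
  rw [← (fexp_iterate_strictMono n).le_iff_le, fexp_iterate_finv_iterate n hx,
    iterate_fixed (by simp [Fexp]) n]
  exact hx

lemma tendsto_fexp_iterate_sub {β c : ℝ} (hβ : 0 < β) (hβc : β < c) :
    Tendsto (fun n => Fexp^[n] c - Fexp^[n] β) atTop atTop := by
  have hgrowth (n : ℕ) : (1 + β) * (Fexp^[n] c - Fexp^[n] β) ≤
      Fexp^[n + 1] c - Fexp^[n + 1] β := by
    have hd : 0 ≤ Fexp^[n] c - Fexp^[n] β :=
      sub_nonneg.2 ((fexp_iterate_strictMono n).monotone hβc.le)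
    have hu : β ≤ Fexp (Fexp^[n] β) := (le_fexp_iterate n β).trans (le_fexp _)
    rw [iterate_succ_apply', iterate_succ_apply']
    nlinarith [mul_sub_le_fexp_sub_fexp (Fexp^[n] c) (Fexp^[n] β)]
  refine tendsto_atTop_mono (fun n => geom_le (by linarith) n fun k _ => hgrowth k) ?_
  exact (tendsto_pow_atTop_atTop_of_one_lt (by linarith)).atTop_mul_const (by simpa using hβc)

lemma exists_add_mul_finv_le {A L : ℝ} (hA : 0 ≤ A) (hL : 0 ≤ L) :
    ∃ E, 0 ≤ E ∧ A + L * Finv E ≤ E := by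
  have hy : 0 ≤ 2 * L + A := by positivity
  refine ⟨Fexp (2 * L + A), (le_fexp _).trans' hy, ?_⟩
  rw [finv_fexp]
  nlinarith [add_sq_div_two_le_fexp hy]

def modelOrbit (a : ℕ → ℝ) (x : ℝ) : ℕ → ℝ
  | 0 => x
  | n + 1 => Fexp (modelOrbit a x n) - a (n + 1)

lemma modelOrbit_succ (a : ℕ → ℝ) (x : ℝ) (n : ℕ) :
    modelOrbit a x (n + 1) = Fexp (modelOrbit a x n) - a (n + 1) := rfl

lemma ofLex_shiftA_iterate (n : ℕ) (s : Addr) (m : ℕ) :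
    ofLex (shiftA^[n] s) m = ofLex s (m + n) := by
  induction n generalizing s with
  | zero => rfl
  | succ n ih => rw [iterate_succ_apply, ih]; rfl

lemma Fmod_iterate (s : Addr) (x : ℝ) (n : ℕ) :
    Fmod^[n] (s, x) =
      (shiftA^[n] s, modelOrbit (fun m => 2 * Real.pi * |((ofLex s m : ℤ) : ℝ)|) x n) := by
  induction n with
  | zero => rfl
  | succ n ih =>
    rw [iterate_succ_apply', ih, Fmod, ← iterate_succ_apply' shiftA, ofLex_shiftA_iterate,
      add_comm 1 n]
    rfl

lemma strictMono_modelOrbit (a : ℕ → ℝ) (n : ℕ) : StrictMono (modelOrbit a · n) := by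
  induction n with
  | zero => exact strictMono_id
  | succ n ih => exact fun x y h => sub_lt_sub_right (fexp_strictMono (ih h)) _

lemma exists_modelOrbit_eq {a : ℕ → ℝ} (ha : ∀ n, 0 ≤ a n) (N : ℕ) {y : ℝ} (hy : 0 ≤ y) :
    ∃ x, modelOrbit a x N = y ∧ ∀ j ≤ N, 0 ≤ modelOrbit a x j := by
  induction N generalizing y with
  | zero => exact ⟨y, rfl, fun j hj => by rwa [Nat.le_zero.1 hj]⟩
  | succ N ih =>
    obtain ⟨x, hxN, hx⟩ := ih (finv_nonneg (add_nonneg hy (ha (N + 1))))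
    have hxN' : modelOrbit a x (N + 1) = y := by
      rw [modelOrbit_succ, hxN, fexp_finv (add_nonneg hy (ha _)), add_sub_cancel_right]
    refine ⟨x, hxN', fun j hj => ?_⟩
    rcases Nat.of_le_succ hj with hj | rfl
    · exact hx j hj
    · exact hxN' ▸ hy

lemma add_one_le_modelOrbit {a : ℕ → ℝ} {x β : ℝ} {N : ℕ}
    (haβ : ∀ j, N < j → a j ≤ Fexp^[j] β) (hN : Fexp^[N] β + 1 ≤ modelOrbit a x N) (k : ℕ) :
    Fexp^[N + k] β + 1 ≤ modelOrbit a x (N + k) := by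
  induction k with
  | zero => exact hN
  | succ k ih =>
    rw [← add_assoc, modelOrbit_succ, iterate_succ_apply']
    have ha := iterate_succ_apply' Fexp (N + k) β ▸ haβ (N + k + 1) (by omega)
    linarith [fexp_strictMono.monotone ih, fexp_add_one_le_fexp_add_one_sub_fexp (Fexp^[N + k] β)]

lemma exists_lt_forall_modelOrbit_nonneg {a : ℕ → ℝ} {t β : ℝ} {N : ℕ} (ha : ∀ n, 0 ≤ a n)
    (hβ : 0 ≤ β) (haβ : ∀ j, N < j → a j ≤ Fexp^[j] β) (hN : Fexp^[N] β + 1 < modelOrbit a t N) :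
    ∃ x < t, ∀ n, 0 ≤ modelOrbit a x n := by
  have hβN : 0 ≤ Fexp^[N] β + 1 := by linarith [le_fexp_iterate N β]
  obtain ⟨x, hxN, hx⟩ := exists_modelOrbit_eq ha N hβN
  refine ⟨x, (strictMono_modelOrbit a N).lt_iff_lt.1 (hxN ▸ hN), fun n => ?_⟩
  rcases le_or_gt n N with hn | hn
  · exact hx n hn
  · obtain ⟨k, rfl⟩ := Nat.exists_eq_add_of_le hn.le
    linarith [add_one_le_modelOrbit haβ hxN.ge k, le_fexp_iterate (N + k) β]

lemma le_log_add_mul_finv {s w x C K L : ℝ} (hw : 0 ≤ w) (hC : 0 ≤ C) (hK : 0 ≤ K) (hKL : K ≤ L)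
    (hL : 1 ≤ L) (hs : Fexp s = w + x) (hx : x ≤ C * w ^ K) :
    s ≤ Real.log (1 + C) + L * Finv w := by
  have hw1 : 1 ≤ 1 + w := by linarith
  have hexp : Real.exp s ≤ (1 + C) * (1 + w) ^ L := by
    have h1 : 1 + w ≤ (1 + w) ^ L := Real.self_le_rpow_of_one_le hw1 hL
    have h2 : w ^ K ≤ (1 + w) ^ L := (Real.rpow_le_rpow hw (by linarith) hK).trans
      (Real.rpow_le_rpow_of_exponent_le hw1 hKL)
    rw [← fexp_add_one, hs]
    nlinarith
  rwa [← Real.exp_le_exp, Real.exp_add, Real.exp_log (by linarith), Finv, mul_comm L,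
    ← Real.rpow_def_of_pos (by linarith)]

lemma exists_le_mul_finv_iterate_add {T : ℕ → ℝ} {A L : ℝ} {N : ℕ} (hT : ∀ n, 0 ≤ T n)
    (hA : 0 ≤ A) (hL : 1 ≤ L) (h : ∀ m ≥ N, T m ≤ A + L * Finv (T (m + 1))) :
    ∃ E, ∀ k m, N ≤ m → T m ≤ L * Finv^[k] (T (m + k)) + E := by
  obtain ⟨E, hE0, hE⟩ :=
    exists_add_mul_finv_le (add_nonneg hA (mul_nonneg (by linarith) (Real.log_nonneg hL)))
      (by linarith : 0 ≤ L)
  refine ⟨E, fun k => ?_⟩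
  induction k with
  | zero =>
    intro m _
    rw [iterate_zero_apply, add_zero]
    nlinarith [hT m]
  | succ k ih =>
    intro m hm
    have hw := finv_iterate_nonneg k (hT (m + 1 + k))
    have hstep : Finv (T (m + 1)) ≤ Real.log L + Finv (Finv^[k] (T (m + 1 + k))) + Finv E :=
      (finv_le_finv (hT _) (ih (m + 1) (by omega))).trans (finv_mul_add_le hL hw hE0)
    rw [iterate_succ_apply', show m + (k + 1) = m + 1 + k by omega]
    nlinarith [h m hm, mul_le_mul_of_nonneg_left hstep (by linarith : 0 ≤ L)]

section PotentialOrbit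

variable {a : ℕ → ℝ} {t : ℝ}

lemma finv_iterate_succ_le_finv_iterate_modelOrbit (ha : ∀ n, 0 ≤ a n)
    (hT : ∀ n, 0 ≤ modelOrbit a t n) (n : ℕ) :
    Finv^[n + 1] (a (n + 1)) ≤ Finv^[n] (modelOrbit a t n) := by
  rw [finv_iterate_le_iff _ (ha _), iterate_succ_apply', fexp_iterate_finv_iterate n (hT n)]
  linarith [hT (n + 1), modelOrbit_succ a t n]

lemma antitone_finv_iterate_modelOrbit (ha : ∀ n, 0 ≤ a n) (hT : ∀ n, 0 ≤ modelOrbit a t n) :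
    Antitone fun n => Finv^[n] (modelOrbit a t n) := by
  refine antitone_nat_of_succ_le fun n => ?_
  rw [finv_iterate_le_iff _ (hT _), iterate_succ_apply', fexp_iterate_finv_iterate n (hT n)]
  linarith [ha (n + 1), modelOrbit_succ a t n]

lemma isBoundedUnder_finv_iterate (ha : ∀ n, 0 ≤ a n) (hT : ∀ n, 0 ≤ modelOrbit a t n) :
    IsBoundedUnder (· ≤ ·) atTop fun n => Finv^[n] (a n) := by
  refine isBoundedUnder_of_eventually_le (a := t) (eventually_atTop.2 ⟨1, fun n hn => ?_⟩)
  obtain ⟨n, rfl⟩ := Nat.exists_eq_add_of_le' hn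
  exact (finv_iterate_succ_le_finv_iterate_modelOrbit ha hT n).trans
    (antitone_finv_iterate_modelOrbit ha hT n.zero_le)

lemma limsup_finv_iterate_nonneg (ha : ∀ n, 0 ≤ a n) (hT : ∀ n, 0 ≤ modelOrbit a t n) :
    0 ≤ limsup (fun n => Finv^[n] (a n)) atTop :=
  le_limsup_of_frequently_le (.of_forall fun n => finv_iterate_nonneg n (ha n))
    (isBoundedUnder_finv_iterate ha hT)

lemma limsup_finv_iterate_le (ha : ∀ n, 0 ≤ a n) (hT : ∀ n, 0 ≤ modelOrbit a t n) (n : ℕ) :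
    limsup (fun n => Finv^[n] (a n)) atTop ≤ Finv^[n] (modelOrbit a t n) := by
  refine limsup_le_of_le (isCoboundedUnder_le_of_le atTop fun j => finv_iterate_nonneg j (ha j))
    (eventually_atTop.2 ⟨n + 1, fun j hj => ?_⟩)
  obtain ⟨j, rfl⟩ := Nat.exists_eq_add_of_le' (n.succ_pos.trans_le hj)
  exact (finv_iterate_succ_le_finv_iterate_modelOrbit ha hT j).trans
    (antitone_finv_iterate_modelOrbit ha hT (by omega))

lemma fexp_iterate_limsup_le_modelOrbit (ha : ∀ n, 0 ≤ a n) (hT : ∀ n, 0 ≤ modelOrbit a t n)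
    (n : ℕ) : Fexp^[n] (limsup (fun n => Finv^[n] (a n)) atTop) ≤ modelOrbit a t n :=
  fexp_iterate_finv_iterate n (hT n) ▸
    (fexp_iterate_strictMono n).monotone (limsup_finv_iterate_le ha hT n)

lemma tendsto_finv_iterate_modelOrbit (ha : ∀ n, 0 ≤ a n) (hT : ∀ n, 0 ≤ modelOrbit a t n)
    (hmin : ∀ x, (∀ n, 0 ≤ modelOrbit a x n) → t ≤ x) :
    Tendsto (fun n => Finv^[n] (modelOrbit a t n)) atTop
      (𝓝 (limsup (fun n => Finv^[n] (a n)) atTop)) := by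
  set b := limsup (fun n => Finv^[n] (a n)) atTop
  set c := ⨅ n, Finv^[n] (modelOrbit a t n)
  have hbdd : BddBelow (Set.range fun n => Finv^[n] (modelOrbit a t n)) :=
    ⟨0, by rintro _ ⟨n, rfl⟩; exact finv_iterate_nonneg n (hT n)⟩
  have hc := tendsto_atTop_ciInf (antitone_finv_iterate_modelOrbit ha hT) hbdd
  suffices c ≤ b from le_antisymm this (le_ciInf (limsup_finv_iterate_le ha hT)) ▸ hc
  by_contra! hbc
  obtain ⟨β, hbβ, hβc⟩ := exists_between hbc
  have hβ : 0 < β := (limsup_finv_iterate_nonneg ha hT).trans_lt hbβ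
  obtain ⟨M, hM⟩ := eventually_atTop.1
    (eventually_lt_of_limsup_lt hbβ (isBoundedUnder_finv_iterate ha hT))
  obtain ⟨N, hNM, hN⟩ := ((eventually_ge_atTop M).and
    ((tendsto_fexp_iterate_sub hβ hβc).eventually_gt_atTop 1)).exists
  have hcN : Fexp^[N] c ≤ modelOrbit a t N :=
    fexp_iterate_finv_iterate N (hT N) ▸ (fexp_iterate_strictMono N).monotone (ciInf_le hbdd N)
  obtain ⟨x, hxt, hx⟩ := exists_lt_forall_modelOrbit_nonneg (N := N) ha hβ.le
    (fun j hj => (finv_iterate_le_iff j (ha j) β).1 (hM j (by omega)).le) (by linarith)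
  exact (hmin x hx).not_gt hxt

lemma exists_modelOrbit_le_mul_fexp_iterate_add (ha : ∀ n, 0 ≤ a n)
    (hT : ∀ n, 0 ≤ modelOrbit a t n) (hmin : ∀ x, (∀ n, 0 ≤ modelOrbit a x n) → t ≤ x)
    {C K : ℝ} (hC : 0 ≤ C) (hK : 0 ≤ K) (h : ∀ᶠ m in atTop, a m < C * modelOrbit a t m ^ K) :
    ∃ L E, 0 < L ∧ ∀ᶠ m in atTop,
      modelOrbit a t m ≤ L * Fexp^[m] (limsup (fun n => Finv^[n] (a n)) atTop) + E := by
  obtain ⟨N, hN⟩ := eventually_atTop.1 ((tendsto_add_atTop_nat 1).eventually h)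
  obtain ⟨E, hE⟩ := exists_le_mul_finv_iterate_add hT (Real.log_nonneg (by linarith))
    (le_max_right K 1) fun m hm => le_log_add_mul_finv (hT _) hC hK (le_max_left K 1)
      (le_max_right K 1) (by rw [modelOrbit_succ]; ring) (hN m hm).le
  refine ⟨max K 1, E, by positivity, eventually_atTop.2 ⟨N, fun m hm => ?_⟩⟩
  have hlim := (((continuous_fexp.iterate m).tendsto _).comp
    ((tendsto_finv_iterate_modelOrbit ha hT hmin).comp (tendsto_add_atTop_nat m))).const_mul
      (max K 1) |>.add_const E
  refine ge_of_tendsto' hlim fun k => (hE k m hm).trans_eq ?_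
  rw [comp_apply, comp_apply, add_comm k m, iterate_add_apply,
    fexp_iterate_finv_iterate m (finv_iterate_nonneg k (hT _))]

theorem modelOrbit_parabola_iff (ha : ∀ n, 0 ≤ a n) (hT : ∀ n, 0 ≤ modelOrbit a t n)
    (htend : Tendsto (modelOrbit a t) atTop atTop)
    (hmin : ∀ x, (∀ n, 0 ≤ modelOrbit a x n) → t ≤ x) {K : ℝ} (hK : 0 ≤ K) :
    (∃ C, 0 < C ∧ ∀ᶠ m in atTop, a m < C * modelOrbit a t m ^ K) ↔
      ∃ C, 0 < C ∧ ∀ᶠ m in atTop,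
        a m < C * (Fexp^[m] (limsup (fun n => Finv^[n] (a n)) atTop)) ^ K := by
  set b := limsup (fun n => Finv^[n] (a n)) atTop
  have hb (m : ℕ) : 0 ≤ Fexp^[m] b :=
    (limsup_finv_iterate_nonneg ha hT).trans (le_fexp_iterate m b)
  constructor
  · rintro ⟨C, hC, h⟩
    obtain ⟨L, E, hL, hTE⟩ := exists_modelOrbit_le_mul_fexp_iterate_add ha hT hmin hC.le hK h
    have hgrow : Tendsto (fun m => Fexp^[m] b) atTop atTop := by
      refine tendsto_atTop_mono' atTop (hTE.mono fun m hm => ?_)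
        ((tendsto_atTop_add_const_right _ (-E) htend).atTop_div_const hL)
      rw [div_le_iff₀ hL]
      linarith
    refine ⟨C * (L + 1) ^ K, by positivity, ?_⟩
    filter_upwards [h, hTE, hgrow.eventually_ge_atTop E] with m hm hTm hEm
    calc a m < C * modelOrbit a t m ^ K := hm
      _ ≤ C * ((L + 1) * Fexp^[m] b) ^ K := by gcongr; exacts [hT m, by linarith]
      _ = C * (L + 1) ^ K * (Fexp^[m] b) ^ K := by rw [Real.mul_rpow (by positivity) (hb m)]; ring
  · rintro ⟨C, hC, h⟩
    refine ⟨C, hC, h.mono fun m hm => hm.trans_le ?_⟩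
    gcongr
    exacts [hb m, fexp_iterate_limsup_le_modelOrbit ha hT m]

end PotentialOrbit

lemma toReal_tS_le {s : Addr} {x : ℝ} (hx : 0 ≤ x) (hX : (s, x) ∈ Xbar) : (tS s).toReal ≤ x :=
  ENNReal.toReal_le_of_le_ofReal hx (sInf_le ⟨x, ⟨hx, hX⟩, rfl⟩)

lemma exists_forall_sub_one_iff_eventually {P : ℝ → ℕ → Prop} :
    (∃ C, 0 < C ∧ ∃ n₀ : ℕ, ∀ n, n₀ ≤ n → 1 ≤ n → P C (n - 1)) ↔
      ∃ C, 0 < C ∧ ∀ᶠ m in atTop, P C m := by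
  refine exists_congr fun C => and_congr_right fun _ => ⟨?_, ?_⟩
  · rintro ⟨n₀, h⟩
    exact eventually_atTop.2 ⟨n₀, fun m hm => h (m + 1) (by omega) (by omega)⟩
  · intro h
    obtain ⟨m₀, h⟩ := eventually_atTop.1 h
    exact ⟨m₀ + 1, fun n hn _ => h (n - 1) (by omega)⟩

theorem parabola_condition_general (s : Addr)
    (hfast : (s, (tS s).toReal) ∈ Xset) (K : ℝ) (hK : 0 < K) :
    (∃ C₁ : ℝ, 0 < C₁ ∧ ∃ n₀ : ℕ, ∀ n : ℕ, n₀ ≤ n → 1 ≤ n →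
        2 * Real.pi * |((ofLex s (n - 1) : ℤ) : ℝ)| <
          C₁ * ((Fmod^[n - 1] (s, (tS s).toReal)).2) ^ K) ↔
    (∃ C₂ : ℝ, 0 < C₂ ∧ ∃ n₀ : ℕ, ∀ n : ℕ, n₀ ≤ n → 1 ≤ n →
        2 * Real.pi * |((ofLex s (n - 1) : ℤ) : ℝ)| <
          C₂ * (Fexp^[n - 1] (minPot s)) ^ K) := by
  set a : ℕ → ℝ := fun m => 2 * Real.pi * |((ofLex s m : ℤ) : ℝ)|
  have horbit (x : ℝ) (n : ℕ) : (Fmod^[n] (s, x)).2 = modelOrbit a x n := by rw [Fmod_iterate]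
  have hXbar (x : ℝ) : (s, x) ∈ Xbar ↔ ∀ n, 0 ≤ modelOrbit a x n :=
    forall_congr' fun n => by rw [horbit]
  obtain ⟨hT, htend⟩ := hfast
  simp only [horbit] at htend ⊢
  exact exists_forall_sub_one_iff_eventually.trans
    ((modelOrbit_parabola_iff (fun n => by positivity) ((hXbar _).1 hT) htend
      (fun x hx => toReal_tS_le (hx 0) ((hXbar x).2 hx)) hK.le).trans
      exists_forall_sub_one_iff_eventually.symm)

/-- **Endpoints satisfying a parabola condition** (Theorem 7.3): for a fast address `s`
with `t_n := T(𝓕^{n-1}(s,t_s))` and `b` the minimal potential, and any `K > 0`: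
`2π|s_n| < C₁ t_n^K` eventually (for some `C₁ > 0`) iff
`2π|s_n| < C₂ (F^{n-1}(b))^K` eventually (for some `C₂ > 0`). -/
theorem parabola_condition (s : Addr) (hfin : tS s ≠ ⊤)
    (hfast : (s, (tS s).toReal) ∈ Xset) (K : ℝ) (hK : 0 < K) :
    (∃ C₁ : ℝ, 0 < C₁ ∧ ∃ n₀ : ℕ, ∀ n : ℕ, n₀ ≤ n → 1 ≤ n →
        2 * Real.pi * |((ofLex s (n - 1) : ℤ) : ℝ)| <
          C₁ * ((Fmod^[n - 1] (s, (tS s).toReal)).2) ^ K) ↔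
    (∃ C₂ : ℝ, 0 < C₂ ∧ ∃ n₀ : ℕ, ∀ n : ℕ, n₀ ≤ n → 1 ≤ n →
        2 * Real.pi * |((ofLex s (n - 1) : ℤ) : ℝ)| <
          C₂ * (Fexp^[n - 1] (minPot s)) ^ K) :=
  parabola_condition_general s hfast K hK
end
end

section
/- Let Q > 0 and Y_Q := {(s,t) ∈ X̄ : T(𝓕ⁿ(s,t)) ≥ Q for all n ≥ 0}. Suppose f : Y_Q ∩ X → X is continuous (with respect to the topology in which ℤ^ℕ carries the order topology of the lexicographic order and ℤ^ℕ × ℝ the product topology, and the subspace topologies on Y_Q ∩ X and X), satisfies f(𝓕(s,t)) = 𝓕(f(s,t)) for all (s,t) ∈ Y_Q ∩ X, and preserves addresses, i.e. f(s,t) ∈ {s} × [0,∞) for all (s,t) ∈ Y_Q ∩ X. Then f is the identity. -/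
open Filter Topology ENNReal

noncomputable section

/-- The constant `Q(K) = max(log(4(K+π+3)), π+2)`. -/
def Qconst (K : ℝ) : ℝ := max (Real.log (4 * (K + Real.pi + 3))) (Real.pi + 2)

/-- `Y_Q = {(s,t) ∈ X̄ : T(𝓕ⁿ(s,t)) ≥ Q for all n}`. -/
def Yset (Q : ℝ) : Set (Addr × ℝ) :=
  {p | p ∈ Xbar ∧ ∀ n : ℕ, Q ≤ (Fmod^[n] p).2}

/-- `Z(s,t) = t + 2πi s₁`. -/
def Zc (p : Addr × ℝ) : ℂ :=
  (p.2 : ℂ) + 2 * Real.pi * Complex.I * ((ofLex p.1 0 : ℤ) : ℂ)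

/-- The approximating maps `𝔤_k`: `𝔤₀ = Z` and
`𝔤_{k+1}(s,t) = Log(𝔤_k(𝓕(s,t)) - κ) + 2πi s₁`, with `Log` the principal logarithm. -/
def gmap (κ : ℂ) : ℕ → Addr × ℝ → ℂ
  | 0 => Zc
  | k + 1 => fun p =>
      Complex.log (gmap κ k (Fmod p) - κ) + 2 * Real.pi * Complex.I * ((ofLex p.1 0 : ℤ) : ℂ)


/-!
Suppose `f (s, t) = (s, u)` with `u ≠ t`. Keep the first `N + 1` entries of `s` and choose the
next one so that the orbit of `(a_N, t)` lands, after `N + 2` steps, in the compact set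
`{0^∞} × [R, F(R + 2π)] ⊆ Y_Q ∩ X`; these addresses `a_N` converge to `s` lexicographically, so
by continuity `f (a_N, t) = (a_N, u_N)` with `u_N → u`. As `F(x) + F(δ) ≤ F(x + δ)`, two points of
one ray at distance `δ` are at distance at least `Fⁿ(δ)` after `n` steps. Hence, by the
conjugacy, `f` moves a point of the compact set by at least `F^{N+2}(|u - t| / 2)`, which is
unbounded in `N`, contradicting the continuity of `f` there.
-/
lemma tendsto_of_ofLex_eq_of_le {β : Type*} [LinearOrder β] [TopologicalSpace (Lex (ℕ → β))]
    [OrderTopology (Lex (ℕ → β))] {a : ℕ → Lex (ℕ → β)} {s : Lex (ℕ → β)}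
    (h : ∀ N k, k ≤ N → ofLex (a N) k = ofLex s k) : Tendsto a atTop (𝓝 s) := by
  rw [tendsto_order]
  refine ⟨fun b ⟨i, hagree, hlt⟩ => ?_, fun b ⟨i, hagree, hlt⟩ => ?_⟩
  all_goals filter_upwards [eventually_ge_atTop i] with N hN
  · exact ⟨i, fun j hj => (hagree j hj).trans (h N j (by omega)).symm,
      hlt.trans_eq (h N i hN).symm⟩
  · exact ⟨i, fun j hj => (h N j (by omega)).trans (hagree j hj), (h N i hN).trans_lt hlt⟩

lemma Fexp_monotone : Monotone Fexp := fun _ _ h => by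
  simpa [Fexp] using Real.exp_le_exp.2 h

lemma self_le_Fexp (x : ℝ) : x ≤ Fexp x := by
  have := Real.add_one_le_exp x
  rw [Fexp]; linarith

lemma Fexp_add (x y : ℝ) : Fexp (x + y) = Fexp x + Fexp y + Fexp x * Fexp y := by
  simp only [Fexp, Real.exp_add]; ring

lemma Fexp_nonneg {x : ℝ} (hx : 0 ≤ x) : 0 ≤ Fexp x := hx.trans (self_le_Fexp x)

lemma Fexp_add_le_Fexp {x y z : ℝ} (hx : 0 ≤ x) (hy : 0 ≤ y) (h : x + y ≤ z) :
    Fexp x + Fexp y ≤ Fexp z := by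
  have := mul_nonneg (Fexp_nonneg hx) (Fexp_nonneg hy)
  linarith [Fexp_add x y, Fexp_monotone h]

lemma Fexp_sub_self_le {x y : ℝ} (hx : 0 ≤ x) (hxy : x ≤ y) : Fexp x - x ≤ Fexp y - y := by
  have := Fexp_add_le_Fexp hx (sub_nonneg.2 hxy) (by linarith : x + (y - x) ≤ y)
  linarith [self_le_Fexp (y - x)]

lemma self_le_iterate_Fexp (x : ℝ) (n : ℕ) : x ≤ Fexp^[n] x :=
  Function.id_le_iterate_of_id_le self_le_Fexp n x

lemma add_mul_le_iterate_Fexp {x : ℝ} (hx : 0 ≤ x) (n : ℕ) :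
    x + n * (Fexp x - x) ≤ Fexp^[n] x := by
  have hc : 0 ≤ Fexp x - x := sub_nonneg.2 (self_le_Fexp x)
  induction n with
  | zero => simp
  | succ n ih =>
    rw [Function.iterate_succ_apply']
    push_cast
    linarith [Fexp_sub_self_le hx (self_le_iterate_Fexp x n)]

lemma tendsto_iterate_Fexp {x : ℝ} (hx : 0 < x) :
    Tendsto (fun n => Fexp^[n] x) atTop atTop := by
  have hc : 0 < Fexp x - x := by
    have := Real.add_one_lt_exp hx.ne'
    rw [Fexp]; linarith
  refine tendsto_atTop_mono (add_mul_le_iterate_Fexp hx.le) ?_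
  exact tendsto_atTop_add_const_left _ _ (tendsto_natCast_atTop_atTop.atTop_mul_const hc)

lemma iterate_Fmod_fst (p : Addr × ℝ) (n : ℕ) : (Fmod^[n] p).1 = shiftA^[n] p.1 := by
  induction n with
  | zero => rfl
  | succ n ih => rw [Function.iterate_succ_apply', Function.iterate_succ_apply', ← ih]; rfl

lemma ofLex_iterate_shiftA (s : Addr) (n k : ℕ) : ofLex (shiftA^[n] s) k = ofLex s (k + n) := by
  induction n generalizing k with
  | zero => rfl
  | succ n ih =>
    rw [Function.iterate_succ_apply', shiftA, ofLex_toLex, ih, add_right_comm, add_assoc]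

lemma iterate_succ_Fmod_snd (p : Addr × ℝ) (n : ℕ) :
    (Fmod^[n + 1] p).2 = Fexp (Fmod^[n] p).2 - 2 * Real.pi * |((ofLex p.1 (n + 1) : ℤ) : ℝ)| := by
  rw [Function.iterate_succ_apply', Fmod, iterate_Fmod_fst, ofLex_iterate_shiftA, add_comm 1 n]

lemma iterate_Fmod_snd_congr {a b : Addr} (t : ℝ) (n : ℕ)
    (h : ∀ k ≤ n, ofLex a k = ofLex b k) : (Fmod^[n] (a, t)).2 = (Fmod^[n] (b, t)).2 := by
  induction n with
  | zero => rfl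
  | succ n ih =>
    rw [iterate_succ_Fmod_snd, iterate_succ_Fmod_snd, ih fun k hk => h k (by omega), h _ le_rfl]

lemma Fmod_zero (x : ℝ) : Fmod (toLex 0, x) = (toLex 0, Fexp x) := by
  simp only [Fmod, shiftA, ofLex_toLex, Pi.zero_apply, Int.cast_zero, abs_zero, mul_zero,
    sub_zero]
  rfl

lemma iterate_Fmod_zero (x : ℝ) (n : ℕ) : Fmod^[n] (toLex 0, x) = (toLex 0, Fexp^[n] x) := by
  induction n with
  | zero => rfl
  | succ n ih => rw [Function.iterate_succ_apply', ih, Fmod_zero, Function.iterate_succ_apply']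

lemma mem_Xbar_iff {p : Addr × ℝ} : p ∈ Xbar ↔ 0 ≤ p.2 ∧ Fmod p ∈ Xbar := by
  simp only [Xbar, Set.mem_ofPred_eq, ← Function.iterate_succ_apply]
  exact ⟨fun h => ⟨h 0, fun n => h _⟩, fun h n => n.casesOn h.1 h.2⟩

lemma mem_Yset_inter_Xset_iff {Q : ℝ} {p : Addr × ℝ} :
    p ∈ Yset Q ∩ Xset ↔ 0 ≤ p.2 ∧ Q ≤ p.2 ∧ Fmod p ∈ Yset Q ∩ Xset := by
  have hT : Tendsto (fun n => (Fmod^[n] (Fmod p)).2) atTop atTop ↔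
      Tendsto (fun n => (Fmod^[n] p).2) atTop atTop := by
    simp only [← Function.iterate_succ_apply]
    exact tendsto_add_atTop_iff_nat (f := fun n => (Fmod^[n] p).2) 1
  have hQ : (∀ n, Q ≤ (Fmod^[n] p).2) ↔ Q ≤ p.2 ∧ ∀ n, Q ≤ (Fmod^[n] (Fmod p)).2 := by
    simp only [← Function.iterate_succ_apply]
    exact ⟨fun h => ⟨h 0, fun n => h _⟩, fun h n => n.casesOn h.1 h.2⟩
  simp only [Yset, Xset, Set.mem_inter_iff, Set.mem_ofPred_eq, hT, hQ, mem_Xbar_iff (p := p)]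
  tauto

lemma mapsTo_Fmod (Q : ℝ) : Set.MapsTo Fmod (Yset Q ∩ Xset) (Yset Q ∩ Xset) :=
  fun _ hp => (mem_Yset_inter_Xset_iff.1 hp).2.2

lemma mem_Yset_inter_Xset_of_iterate {Q : ℝ} {p : Addr × ℝ} {m : ℕ}
    (h : ∀ k < m, 0 ≤ (Fmod^[k] p).2 ∧ Q ≤ (Fmod^[k] p).2)
    (hm : Fmod^[m] p ∈ Yset Q ∩ Xset) : p ∈ Yset Q ∩ Xset := by
  induction m generalizing p with
  | zero => exact hm
  | succ m ih =>
    refine mem_Yset_inter_Xset_iff.2 ⟨(h 0 m.succ_pos).1, (h 0 m.succ_pos).2, ih ?_ hm⟩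
    intro k hk
    simpa only [← Function.iterate_succ_apply] using h (k + 1) (by omega)

lemma zero_prod_mem_Yset_inter_Xset {Q x : ℝ} (hx : 0 < x) (hQx : Q ≤ x) :
    ((toLex 0, x) : Addr × ℝ) ∈ Yset Q ∩ Xset := by
  have hle := self_le_iterate_Fexp x
  simp only [Yset, Xset, Xbar, Set.mem_inter_iff, Set.mem_ofPred_eq, iterate_Fmod_zero]
  exact ⟨⟨fun n => hx.le.trans (hle n), fun n => hQx.trans (hle n)⟩,
    fun n => hx.le.trans (hle n), tendsto_iterate_Fexp hx⟩

lemma add_iterate_Fexp_le_iterate_Fmod_snd {p q : Addr × ℝ} {δ : ℝ} (hfst : p.1 = q.1)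
    (hp : p ∈ Xbar) (hδ : 0 ≤ δ) (h : p.2 + δ ≤ q.2) (n : ℕ) :
    (Fmod^[n] p).2 + Fexp^[n] δ ≤ (Fmod^[n] q).2 := by
  induction n generalizing p q δ with
  | zero => exact h
  | succ n ih =>
    simp only [Function.iterate_succ_apply]
    refine ih (by simp [Fmod, hfst]) (mem_Xbar_iff.1 hp).2 (Fexp_nonneg hδ) ?_
    have := Fexp_add_le_Fexp (mem_Xbar_iff.1 hp).1 hδ h
    simp only [Fmod, hfst]
    linarith

lemma iterate_Fexp_abs_sub_le {p q : Addr × ℝ} (hfst : p.1 = q.1) (hp : p ∈ Xbar)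
    (hq : q ∈ Xbar) (n : ℕ) :
    Fexp^[n] |p.2 - q.2| ≤ |(Fmod^[n] p).2 - (Fmod^[n] q).2| := by
  wlog hpq : p.2 ≤ q.2 generalizing p q
  · rw [abs_sub_comm, abs_sub_comm (Fmod^[n] p).2]
    exact this hfst.symm hq hp (le_of_not_ge hpq)
  rw [abs_sub_comm, abs_of_nonneg (sub_nonneg.2 hpq), abs_sub_comm]
  have := add_iterate_Fexp_le_iterate_Fmod_snd hfst hp (sub_nonneg.2 hpq) (by linarith) n
  exact (le_sub_iff_add_le'.2 this).trans (le_abs_self _)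

lemma iterate_comm_of_mapsTo {α β : Type*} {g : α → α} {g' : β → β} {f : α → β} {S : Set α}
    (hS : Set.MapsTo g S S) (h : ∀ p ∈ S, f (g p) = g' (f p)) (n : ℕ) {p : α} (hp : p ∈ S) :
    f (g^[n] p) = g'^[n] (f p) := by
  induction n with
  | zero => rfl
  | succ n ih =>
    rw [Function.iterate_succ_apply', Function.iterate_succ_apply', h _ (hS.iterate n hp), ih]

lemma sub_floor_div_mul_mem_Ico {a y R : ℝ} (ha : 0 < a) (hy : R ≤ y) :
    y - ⌊(y - R) / a⌋₊ * a ∈ Set.Ico R (R + a) := by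
  have h₁ := (le_div_iff₀ ha).1 (Nat.floor_le (div_nonneg (sub_nonneg.2 hy) ha.le))
  have h₂ := (div_lt_iff₀ ha).1 (Nat.lt_floor_add_one ((y - R) / a))
  constructor <;> linarith

lemma exists_tendsto_iterate_mem_zero_prod {Q R : ℝ} (hR : 0 < R) (hQR : Q ≤ R) {s : Addr}
    {t : ℝ} (hp : (s, t) ∈ Yset Q ∩ Xset) :
    ∃ a : ℕ → Addr, Tendsto a atTop (𝓝 s) ∧ ∀ᶠ N in atTop, (a N, t) ∈ Yset Q ∩ Xset ∧
      Fmod^[N + 2] (a N, t) ∈ ({toLex 0} : Set Addr) ×ˢ Set.Icc R (Fexp (R + 2 * Real.pi)) := by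
  set pot : ℕ → ℝ := fun n => (Fmod^[n] (s, t)).2
  set M : ℕ → ℕ := fun N => ⌊(Fexp (pot N) - R) / (2 * Real.pi)⌋₊
  -- the entry `N + 1` brings the potential at time `N + 1` down into `[R, R + 2π)`
  set a : ℕ → Addr := fun N => toLex fun k =>
    if k ≤ N then ofLex s k else if k = N + 1 then (M N : ℤ) else 0
  refine ⟨a, tendsto_of_ofLex_eq_of_le fun N k hk => if_pos hk, ?_⟩
  filter_upwards [hp.2.2.eventually_ge_atTop R] with N hN
  have hpre : ∀ k ≤ N, (Fmod^[k] (a N, t)).2 = pot k := fun k hk =>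
    iterate_Fmod_snd_congr t k fun j hj => if_pos (hj.trans hk)
  have hnext : (Fmod^[N + 1] (a N, t)).2 ∈ Set.Ico R (R + 2 * Real.pi) := by
    rw [iterate_succ_Fmod_snd, hpre N le_rfl]
    have : ofLex (a N) (N + 1) = M N := by simp [a]
    rw [this, Int.cast_natCast, abs_of_nonneg (Nat.cast_nonneg _), mul_comm (2 * Real.pi)]
    exact sub_floor_div_mul_mem_Ico Real.two_pi_pos (hN.trans (self_le_Fexp _))
  have hzero : ∀ k, ofLex (a N) (k + (N + 2)) = 0 := fun k => by
    simp only [a, ofLex_toLex]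
    rw [if_neg (by omega), if_neg (by omega)]
  have hlast : Fmod^[N + 2] (a N, t) = (toLex 0, Fexp (Fmod^[N + 1] (a N, t)).2) := by
    refine Prod.ext ?_ ?_
    · rw [iterate_Fmod_fst]
      funext k
      exact (ofLex_iterate_shiftA _ _ k).trans (hzero k)
    · rw [iterate_succ_Fmod_snd]
      simpa using hzero 0
  refine ⟨mem_Yset_inter_Xset_of_iterate (m := N + 2) (fun k hk => ?_) ?_, ?_⟩
  · rcases Nat.lt_succ_iff_lt_or_eq.1 hk with hk | rfl
    · rw [hpre k (by omega)]
      exact ⟨hp.1.1 k, hp.1.2 k⟩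
    · exact ⟨hR.le.trans hnext.1, hQR.trans hnext.1⟩
  all_goals rw [hlast]
  · exact zero_prod_mem_Yset_inter_Xset (hR.trans_le (hnext.1.trans (self_le_Fexp _)))
      (hQR.trans (hnext.1.trans (self_le_Fexp _)))
  · exact ⟨rfl, hnext.1.trans (self_le_Fexp _), Fexp_monotone hnext.2.le⟩

theorem no_self_conjugacy_general (Q : ℝ) (f : Addr × ℝ → Addr × ℝ)
    (hmaps : Set.MapsTo f (Yset Q ∩ Xset) Xset)
    (hcont : ContinuousOn f (Yset Q ∩ Xset))
    (hcomm : ∀ p ∈ Yset Q ∩ Xset, f (Fmod p) = Fmod (f p))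
    (haddr : ∀ p ∈ Yset Q ∩ Xset, (f p).1 = p.1 ∧ 0 ≤ (f p).2) :
    ∀ p ∈ Yset Q ∩ Xset, f p = p := by
  rintro ⟨s, t⟩ hp
  set R := max Q 1
  have hR : 0 < R := lt_max_of_lt_right one_pos
  obtain ⟨a, ha, hev⟩ := exists_tendsto_iterate_mem_zero_prod hR (le_max_left Q 1) hp
  set K : Set (Addr × ℝ) := {toLex 0} ×ˢ Set.Icc R (Fexp (R + 2 * Real.pi))
  have hKS : K ⊆ Yset Q ∩ Xset := by
    rintro ⟨_, x⟩ ⟨rfl, hx, -⟩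
    exact zero_prod_mem_Yset_inter_Xset (hR.trans_le hx) ((le_max_left Q 1).trans hx)
  obtain ⟨B, hB⟩ : ∃ B, ∀ q ∈ K, ‖(f q).2 - q.2‖ ≤ B :=
    (isCompact_singleton.prod isCompact_Icc).exists_bound_of_continuousOn
      ((continuous_snd.comp_continuousOn (hcont.mono hKS)).sub continuous_snd.continuousOn)
  have hconv : Tendsto (fun N => (f (a N, t)).2) atTop (𝓝 (f (s, t)).2) :=
    (continuous_snd.tendsto _).comp ((hcont _ hp).tendsto.comp (tendsto_nhdsWithin_iff.2
      ⟨ha.prodMk_nhds tendsto_const_nhds, hev.mono fun _ h => h.1⟩))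
  refine Prod.ext (haddr _ hp).1 (by_contra fun hne => ?_)
  set δ := |(f (s, t)).2 - t| / 2
  have hne' : 0 < |(f (s, t)).2 - t| := abs_pos.2 (sub_ne_zero.2 hne)
  have hδ : 0 < δ := half_pos hne'
  have hfar : ∀ᶠ N in atTop, δ < |(f (a N, t)).2 - t| :=
    (hconv.sub_const t).abs.eventually (lt_mem_nhds (half_lt_self hne'))
  have hgrow : ∀ᶠ N in atTop, B < Fexp^[N + 2] δ :=
    ((tendsto_iterate_Fexp hδ).comp (tendsto_add_atTop_nat 2)).eventually_gt_atTop B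
  obtain ⟨N, ⟨hmem, hK⟩, hfarN, hgrowN⟩ := (hev.and (hfar.and hgrow)).exists
  have hbound := hB _ hK
  rw [iterate_comm_of_mapsTo (mapsTo_Fmod Q) hcomm (N + 2) hmem, Real.norm_eq_abs] at hbound
  have hmoved := iterate_Fexp_abs_sub_le (haddr _ hmem).1 (hmaps hmem).1 hmem.1.1 (N + 2)
  linarith [Fexp_monotone.iterate (N + 2) hfarN.le]

/-- **No nontrivial self-conjugacies** (Theorem 8.1): a continuous map
`f : Y_Q ∩ X → X` (for the lexicographic order topology on addresses and the product
topology) commuting with `𝓕` and preserving each ray `{s} × [0,∞)` is the identity. -/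
theorem no_self_conjugacy (Q : ℝ) (hQ : 0 < Q) (f : Addr × ℝ → Addr × ℝ)
    (hmaps : Set.MapsTo f (Yset Q ∩ Xset) Xset)
    (hcont : ContinuousOn f (Yset Q ∩ Xset))
    (hcomm : ∀ p ∈ Yset Q ∩ Xset, f (Fmod p) = Fmod (f p))
    (haddr : ∀ p ∈ Yset Q ∩ Xset, (f p).1 = p.1 ∧ 0 ≤ (f p).2) :
    ∀ p ∈ Yset Q ∩ Xset, f p = p :=
  no_self_conjugacy_general Q f hmaps hcont hcomm haddr
end
end

section
/- Let f : ℤ^ℕ → ℤ^ℕ be a bijection of the space of external addresses that is strictly order-preserving for the lexicographic order and commutes with the shift, f(σ(s)) = σ(f(s)) for all s. Then there exists j ∈ ℤ such that f(s₁s₂s₃…) = (s₁+j)(s₂+j)(s₃+j)… for all external addresses s = s₁s₂s₃…. -/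
open Filter Topology ENNReal

noncomputable section

/-!
A shift-commuting map permutes the fixed points of `σ`, which are the constant addresses, and
maps each fibre `σ⁻¹(t) = {a t : a ∈ ℤ}` onto the fibre `σ⁻¹(f t)`. Both kinds of sets are ordered
like `ℤ`, and an order automorphism of `ℤ` is a translation; so `f` adds a constant `j` to
constant addresses and, comparing the fibre over `m m m …` with its fixed point, sends `a m m …`
to `(a+j) (m+j) (m+j) …`. Squeezing an arbitrary `s` between two such addresses with the same
first entry pins down the first entry of `f s`, and the shift propagates this to every entry.
-/

theorem Int.exists_eq_add_of_strictMono_of_surjective {g : ℤ → ℤ} (hg : StrictMono g)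
    (hsurj : Function.Surjective g) : ∃ k, ∀ a, g a = a + k := by
  have hsucc (a : ℤ) : g (a + 1) = g a + 1 := by
    simpa [Order.succ_eq_add_one] using (StrictMono.orderIsoOfSurjective g hg hsurj).map_succ a
  refine ⟨g 0, fun a => ?_⟩
  induction a using Int.induction_on with
  | zero => simp
  | succ n ih => rw [hsucc, ih]; ring
  | pred n ih => have := hsucc (-n - 1); simp only [sub_add_cancel] at this; linarith

theorem exists_add_of_strictMono_of_mapsTo_of_surjOn {α β : Type*} [Preorder α] [Preorder β]
    {φ : ℤ → α} {ψ : ℤ → β} {f : α → β} (hφ : StrictMono φ) (hψ : StrictMono ψ)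
    (hf : StrictMono f) (hmaps : ∀ a, f (φ a) ∈ Set.range ψ)
    (hsurj : ∀ b, ∃ a, f (φ a) = ψ b) : ∃ k, ∀ a, f (φ a) = ψ (a + k) := by
  choose e he using hmaps
  have he_mono : StrictMono e := fun a b hab => hψ.lt_iff_lt.mp (by
    rw [he, he]; exact hf (hφ hab))
  have he_surj : Function.Surjective e := fun b => by
    obtain ⟨a, ha⟩ := hsurj b
    exact ⟨a, hψ.injective ((he a).trans ha)⟩
  obtain ⟨k, hk⟩ := Int.exists_eq_add_of_strictMono_of_surjective he_mono he_surj
  exact ⟨k, fun a => by rw [← he, hk]⟩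

def cstA (c : ℤ) : Addr := toLex fun _ => c

def consA (a : ℤ) (t : Addr) : Addr := toLex fun
  | 0 => a
  | n + 1 => ofLex t n

@[simp] theorem ofLex_consA_zero (a : ℤ) (t : Addr) : ofLex (consA a t) 0 = a := rfl

@[simp] theorem ofLex_consA_succ (a : ℤ) (t : Addr) (n : ℕ) :
    ofLex (consA a t) (n + 1) = ofLex t n := rfl

@[simp] theorem shiftA_consA (a : ℤ) (t : Addr) : shiftA (consA a t) = t := rfl

@[simp] theorem shiftA_cstA (c : ℤ) : shiftA (cstA c) = cstA c := rfl

theorem consA_ofLex_zero_shiftA (s : Addr) : consA (ofLex s 0) (shiftA s) = s := by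
  refine congrArg toLex (funext fun n => ?_)
  cases n <;> rfl

theorem consA_cstA_self (c : ℤ) : consA c (cstA c) = cstA c := by
  refine congrArg toLex (funext fun n => ?_)
  cases n <;> rfl

theorem eq_cstA_of_shiftA_eq {s : Addr} (h : shiftA s = s) : s = cstA (ofLex s 0) := by
  have hconst (n : ℕ) : ofLex s n = ofLex s 0 := by
    induction n with
    | zero => rfl
    | succ n ih => rw [← ih, ← congrFun (congrArg ofLex h) n]; rfl
  exact congrArg toLex (funext hconst)

theorem strictMono_cstA : StrictMono cstA := fun _ _ h => ⟨0, by simp, h⟩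

theorem strictMono_consA_left (t : Addr) : StrictMono (consA · t) := fun _ _ h => ⟨0, by simp, h⟩

theorem strictMono_consA_right (a : ℤ) : StrictMono (consA a) := by
  rintro s t ⟨i, heq, hlt⟩
  refine ⟨i + 1, fun j hj => ?_, hlt⟩
  cases j with
  | zero => rfl
  | succ j => exact heq j (by omega)

theorem ofLex_zero_le_of_le {s t : Addr} (h : s ≤ t) : ofLex s 0 ≤ ofLex t 0 := by
  rcases h.lt_or_eq with ⟨i, heq, hlt⟩ | rfl
  · cases i with
    | zero => exact hlt.le
    | succ i => exact (heq 0 i.succ_pos).le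
  · rfl

section Conjugacy

variable {f : Addr → Addr}

theorem exists_map_cstA (hf : StrictMono f) (hsurj : Function.Surjective f)
    (hcomm : ∀ s, f (shiftA s) = shiftA (f s)) : ∃ j, ∀ c, f (cstA c) = cstA (c + j) := by
  refine exists_add_of_strictMono_of_mapsTo_of_surjOn strictMono_cstA strictMono_cstA hf
    (fun c => ⟨_, (eq_cstA_of_shiftA_eq (by rw [← hcomm, shiftA_cstA])).symm⟩) fun b => ?_
  obtain ⟨s, hs⟩ := hsurj (cstA b)
  have hfix : shiftA s = s := hf.injective (by rw [hcomm, hs, shiftA_cstA])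
  exact ⟨ofLex s 0, by rw [← eq_cstA_of_shiftA_eq hfix, hs]⟩

theorem exists_map_consA (hf : StrictMono f) (hsurj : Function.Surjective f)
    (hcomm : ∀ s, f (shiftA s) = shiftA (f s)) (t : Addr) :
    ∃ k, ∀ a, f (consA a t) = consA (a + k) (f t) := by
  refine exists_add_of_strictMono_of_mapsTo_of_surjOn (strictMono_consA_left t)
    (strictMono_consA_left (f t)) hf (fun a => ⟨ofLex (f (consA a t)) 0, ?_⟩) fun b => ?_
  · conv_rhs => rw [← consA_ofLex_zero_shiftA (f (consA a t)), ← hcomm, shiftA_consA]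
  · obtain ⟨s, hs⟩ := hsurj (consA b (f t))
    have hfibre : shiftA s = t := hf.injective (by rw [hcomm, hs, shiftA_consA])
    exact ⟨ofLex s 0, by subst hfibre; rw [consA_ofLex_zero_shiftA, hs]⟩

variable {j : ℤ}

theorem map_consA_cstA (hf : StrictMono f) (hsurj : Function.Surjective f)
    (hcomm : ∀ s, f (shiftA s) = shiftA (f s)) (hj : ∀ c, f (cstA c) = cstA (c + j))
    (a m : ℤ) : f (consA a (cstA m)) = consA (a + j) (cstA (m + j)) := by
  obtain ⟨k, hk⟩ := exists_map_consA hf hsurj hcomm (cstA m)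
  have hkj : k = j := by
    have h := congrArg (fun x : Addr => ofLex x 0) (hk m)
    simp only [consA_cstA_self, hj, ofLex_consA_zero] at h
    exact (add_left_cancel h).symm
  rw [hk, hj, hkj]

theorem ofLex_apply_zero_eq_add (hf : StrictMono f) (hsurj : Function.Surjective f)
    (hcomm : ∀ s, f (shiftA s) = shiftA (f s)) (hj : ∀ c, f (cstA c) = cstA (c + j))
    (s : Addr) : ofLex (f s) 0 = ofLex s 0 + j := by
  set a := ofLex s 0
  set b := ofLex (shiftA s) 0
  have hbelow : consA a (cstA (b - 1)) < s := by
    rw [← consA_ofLex_zero_shiftA s]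
    exact strictMono_consA_right a ⟨0, by simp, by simp [cstA, b]⟩
  have habove : s < consA a (cstA (b + 1)) := by
    rw [← consA_ofLex_zero_shiftA s]
    exact strictMono_consA_right a ⟨0, by simp, by simp [cstA, b]⟩
  have hlow := ofLex_zero_le_of_le (hf hbelow).le
  have hhigh := ofLex_zero_le_of_le (hf habove).le
  rw [map_consA_cstA hf hsurj hcomm hj, ofLex_consA_zero] at hlow hhigh
  exact le_antisymm hhigh hlow

theorem ofLex_apply_eq_add (hf : StrictMono f) (hsurj : Function.Surjective f)
    (hcomm : ∀ s, f (shiftA s) = shiftA (f s)) (hj : ∀ c, f (cstA c) = cstA (c + j))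
    (n : ℕ) (s : Addr) : ofLex (f s) n = ofLex s n + j := by
  induction n generalizing s with
  | zero => exact ofLex_apply_zero_eq_add hf hsurj hcomm hj s
  | succ n ih =>
    calc ofLex (f s) (n + 1) = ofLex (f (shiftA s)) n := by rw [hcomm]; rfl
      _ = ofLex s (n + 1) + j := ih (shiftA s)

end Conjugacy

/-- **Self-conjugacies of the shift** (Lemma 8.3): every order-preserving bijection of the
space of external addresses (with the lexicographic order) commuting with the shift is
given by adding a fixed integer `j` to every entry. -/
theorem shift_self_conjugacies (f : Addr → Addr) (hbij : Function.Bijective f)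
    (hmono : StrictMono f) (hcomm : ∀ s : Addr, f (shiftA s) = shiftA (f s)) :
    ∃ j : ℤ, ∀ s : Addr, f s = toLex (fun n => ofLex s n + j) := by
  obtain ⟨j, hj⟩ := exists_map_cstA hmono hbij.surjective hcomm
  exact ⟨j, fun s =>
    congrArg toLex (funext fun n => ofLex_apply_eq_add hmono hbij.surjective hcomm hj n s)⟩
end
end
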